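/- With the transported shuffle product ш and the coefficient function C(t1,...,t_{k-1}) = ∑_{j=1}^{k-1} 2^{t1+...+tj - j} + 2^{t1+...+t_{k-1} - (k-1)}: for positive integers k ≥ 2 and n ≥ k, ∑_{r + s1 + ... + s_{k-1} = n, all ≥ 1} z_r ш z_{s1,...,s_{k-1}} = ∑_{t1+...+tk = n, ti ≥ 1} C(t1,...,t_{k-1}) · z_{t1,...,tk}. -/

import Mathlib

open Finsupp

/-- The free ℤ-module on words in the two letters `x₀, x₁`
(`false` plays the role of `x₀` and `true` the role of `x₁`). -/
abbrev XWords : Type := (List Bool) →₀ ℤ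

/-- The free ℤ-module on words `z_{s₁,…,s_k}` (a word is the list of its indices). -/
abbrev QWords : Type := (List ℕ) →₀ ℤ

/-- A word in `x₀, x₁` as a basis element. -/
noncomputable def xw (l : List Bool) : XWords := Finsupp.single l 1

/-- The word `z_{s₁,…,s_k}` as a basis element. -/
noncomputable def zw (l : List ℕ) : QWords := Finsupp.single l 1

/-- The bijection `z_{s₁,…,s_k} ↔ x₀^{s₁-1} x₁ ⋯ x₀^{s_k-1} x₁` on words. -/
def encodeWord : List ℕ → List Bool
  | [] => []
  | s :: t => List.replicate (s - 1) false ++ true :: encodeWord t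

/-- The coefficient `C(t₁,…,t_m) = ∑_{j=1}^{m} 2^{(t₁+⋯+t_j)-j} + 2^{(t₁+⋯+t_m)-m}`,
with `C` of the empty tuple equal to `1`. -/
def Ccoef (t : List ℕ) : ℤ :=
  (∑ j ∈ Finset.range t.length, 2 ^ ((t.take (j + 1)).sum - (j + 1)))
    + 2 ^ (t.sum - t.length)
/-!
Transport along `encodeWord`, which is injective on lists of positive integers, moves the
identity into the free module on words in `x₀, x₁`. There an element is determined by its
constant coefficient and its left quotients `∂ₐ x = ∑_w x(a w) w`, and the shuffle recursion says
exactly that each `∂ₐ` is a derivation of `ш`. Write `u_p = x₀^p x₁` and `E(m, j)` for the sum of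
the words `z_s` over the compositions `s` of `m` into `j` parts. Both
`G(n, j) = ∑_{p+m=n} u_p ш E(m, j)` and `H(n, j) = ∑_t C(t₁,…,t_j) z_t`, over the compositions `t`
of `n + 1` into `j + 1` parts, have zero constant coefficient and satisfy
`∂₀ X(n+1, j+1) = 2 X(n, j+1)` and `∂₁ X(n+1, j+1) = E(n+1, j+1) + X(n, j)`; they agree for `j = 0`
and for `n = 0`, so `G = H` by induction on `n`. On the side of `H` the two recursions are
`C(1, t) = 1 + C(t)` and `C(a + 1, t) = 2 C(a, t)` for `a ≥ 1`.
-/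

open Finset

noncomputable def letterDeriv (a : Bool) : XWords →ₗ[ℤ] XWords :=
  lcomapDomain (List.cons a) (List.cons_injective)

@[simp]
lemma letterDeriv_apply (a : Bool) (x : XWords) (w : List Bool) :
    letterDeriv a x w = x (a :: w) :=
  comapDomain_apply _ _ _ _

lemma ext_letterDeriv {x y : XWords} (hnil : x [] = y [])
    (hderiv : ∀ a, letterDeriv a x = letterDeriv a y) : x = y := by
  ext (_ | ⟨a, w⟩)
  · exact hnil
  · simpa using DFunLike.congr_fun (hderiv a) w

lemma xw_cons (a : Bool) (w : List Bool) : xw (a :: w) = mapDomain (List.cons a) (xw w) := by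
  simp [xw, mapDomain_single]

@[simp]
lemma mapDomain_cons_apply_nil (a : Bool) (x : XWords) : mapDomain (List.cons a) x [] = 0 :=
  mapDomain_of_notMem_range _ _ (by simp)

@[simp]
lemma letterDeriv_mapDomain_cons (a b : Bool) (x : XWords) :
    letterDeriv a (mapDomain (List.cons b) x) = if a = b then x else 0 := by
  ext w
  split_ifs with hab
  · simp [hab, mapDomain_apply List.cons_injective]
  · simpa using mapDomain_of_notMem_range _ _ (by simpa [eq_comm] using hab)

@[simp]
lemma xw_apply_nil (w : List Bool) : xw w [] = if w = [] then 1 else 0 := by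
  simp [xw, single_apply]

@[simp]
lemma letterDeriv_xw_nil (a : Bool) : letterDeriv a (xw []) = 0 := by
  ext w; simp [xw]

@[simp]
lemma letterDeriv_xw_cons (a b : Bool) (w : List Bool) :
    letterDeriv a (xw (b :: w)) = if a = b then xw w else 0 := by
  rw [xw_cons, letterDeriv_mapDomain_cons]

lemma bilinear_ext_xw {M : Type*} [AddCommMonoid M] [Module ℤ M]
    {B B' : XWords →ₗ[ℤ] XWords →ₗ[ℤ] M} (h : ∀ u v, B (xw u) (xw v) = B' (xw u) (xw v)) :
    B = B' := by
  refine LinearMap.ext_basis (Finsupp.basisSingleOne (R := ℤ)) (Finsupp.basisSingleOne (R := ℤ))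
    fun u v => ?_
  rw [coe_basisSingleOne]
  exact h u v

@[simp]
lemma encodeWord_nil : encodeWord [] = [] := rfl

@[simp]
lemma encodeWord_one_cons (t : List ℕ) : encodeWord (1 :: t) = true :: encodeWord t := rfl

lemma encodeWord_succ_cons {a : ℕ} (ha : 0 < a) (t : List ℕ) :
    encodeWord ((a + 1) :: t) = false :: encodeWord (a :: t) := by
  obtain ⟨a, rfl⟩ := Nat.exists_eq_add_of_lt ha
  simp [encodeWord, List.replicate_succ]

lemma encodeWord_ne_nil {t : List ℕ} (ht : t ≠ []) : encodeWord t ≠ [] := by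
  cases t <;> simp_all [encodeWord]

def decodeWord : List Bool → List ℕ
  | [] => []
  | true :: w => 1 :: decodeWord w
  | false :: w => (decodeWord w).modifyHead (· + 1)

lemma decodeWord_encodeWord {t : List ℕ} (ht : ∀ x ∈ t, 0 < x) : decodeWord (encodeWord t) = t := by
  induction t with
  | nil => rfl
  | cons a t ih =>
    have hrep : ∀ p, decodeWord (List.replicate p false ++ true :: encodeWord t) =
        (p + 1) :: t := by
      intro p
      induction p with
      | zero => simp [decodeWord, ih fun x hx => ht x (by simp [hx])]
      | succ p ihp => simp [List.replicate_succ, decodeWord, ihp]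
    simpa [encodeWord, Nat.sub_add_cancel (ht a (by simp))] using hrep (a - 1)

lemma encodeWord_injOn : Set.InjOn encodeWord {t | ∀ x ∈ t, 0 < x} :=
  Set.LeftInvOn.injOn (f₁' := decodeWord) fun _ ht => decodeWord_encodeWord ht

def compositionBlocks (m j : ℕ) : Finset (List ℕ) :=
  (univ.filter fun c : Composition m => c.length = j).image Composition.blocks

lemma mem_compositionBlocks {m j : ℕ} {l : List ℕ} :
    l ∈ compositionBlocks m j ↔ l.sum = m ∧ l.length = j ∧ ∀ x ∈ l, 0 < x := by
  simp only [compositionBlocks, mem_image, mem_filter, mem_univ, true_and]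
  constructor
  · rintro ⟨c, rfl, rfl⟩
    exact ⟨c.blocks_sum, rfl, fun _ => c.blocks_pos⟩
  · rintro ⟨hsum, hlen, hpos⟩
    exact ⟨⟨l, hpos _, hsum⟩, hlen, rfl⟩

lemma sum_compositions_eq_sum_compositionBlocks {M : Type*} [AddCommMonoid M] (n k : ℕ)
    (f : List ℕ → M) :
    ∑ c ∈ univ.filter (fun c : Composition n => c.length = k), f c.blocks =
      ∑ l ∈ compositionBlocks n k, f l :=
  (sum_image fun _ _ _ _ h => Composition.ext h).symm

@[simp]
lemma compositionBlocks_zero_zero : compositionBlocks 0 0 = {[]} := by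
  ext l
  simp only [mem_compositionBlocks, List.length_eq_zero_iff, mem_singleton]
  constructor
  · exact fun h => h.2.1
  · rintro rfl
    simp

@[simp]
lemma compositionBlocks_zero_succ (j : ℕ) : compositionBlocks 0 (j + 1) = ∅ := by
  ext l
  simp only [mem_compositionBlocks, Finset.notMem_empty, iff_false, not_and]
  intro hsum hlen hpos
  have := l.length_le_sum_of_one_le hpos
  omega

@[simp]
lemma compositionBlocks_succ_zero (m : ℕ) : compositionBlocks (m + 1) 0 = ∅ := by
  ext l
  simp only [mem_compositionBlocks, List.length_eq_zero_iff, Finset.notMem_empty, iff_false]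
  rintro ⟨hsum, rfl, -⟩
  simp at hsum

section CompositionSums

variable {M : Type*} [AddCommMonoid M]

lemma sum_compositionBlocks_succ_succ (n j : ℕ) (f : List ℕ → M) :
    ∑ l ∈ compositionBlocks (n + 1) (j + 1), f l =
      ∑ x ∈ antidiagonal n, ∑ s ∈ compositionBlocks x.2 j, f ((x.1 + 1) :: s) := by
  rw [sum_sigma']
  symm
  refine sum_nbij' (fun x => (x.1.1 + 1) :: x.2) (fun l => ⟨(l.headI - 1, l.tail.sum), l.tail⟩)
    ?_ ?_ ?_ ?_ fun _ _ => rfl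
  · rintro ⟨⟨p, m⟩, s⟩ h
    simp only [mem_sigma, HasAntidiagonal.mem_antidiagonal, mem_compositionBlocks] at h
    simp only [mem_compositionBlocks, List.sum_cons, List.length_cons, List.mem_cons,
      forall_eq_or_imp]
    exact ⟨by omega, by omega, p.succ_pos, h.2.2.2⟩
  · rintro (_ | ⟨a, s⟩) h
    · simp [mem_compositionBlocks] at h
    simp only [mem_compositionBlocks, List.sum_cons, List.length_cons, Nat.add_right_cancel_iff,
      List.mem_cons, forall_eq_or_imp] at h
    simp only [mem_sigma, HasAntidiagonal.mem_antidiagonal, mem_compositionBlocks, List.headI_cons,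
      List.tail_cons, true_and]
    exact ⟨by omega, h.2.1, h.2.2.2⟩
  · rintro ⟨⟨p, m⟩, s⟩ h
    simp only [mem_sigma, mem_compositionBlocks] at h
    simp [h.2.1]
  · rintro (_ | ⟨a, s⟩) h
    · simp [mem_compositionBlocks] at h
    simp only [mem_compositionBlocks, List.sum_cons, List.mem_cons, forall_eq_or_imp] at h
    simp only [List.headI_cons, List.tail_cons, Nat.sub_add_cancel h.2.2.1]

lemma sum_compositionBlocks_succ_succ_eq_one_cons_add (m j : ℕ) (f : List ℕ → M) :
    ∑ l ∈ compositionBlocks (m + 1) (j + 1), f l =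
      ∑ s ∈ compositionBlocks m j, f (1 :: s) +
        ∑ t ∈ compositionBlocks m (j + 1), f (t.modifyHead (· + 1)) := by
  rw [sum_compositionBlocks_succ_succ]
  cases m with
  | zero => simp
  | succ m =>
    rw [Finset.Nat.sum_antidiagonal_succ, sum_compositionBlocks_succ_succ]
    rfl

end CompositionSums

/-- `wordSum (fun _ => 1) m j` is `E(m, j)`, and
`wordSum (fun t => Ccoef t.dropLast) (n + 1) (j + 1)` is `H(n, j)`: for `t` with `j + 1` parts,
`Ccoef t.dropLast` is `C(t₁,…,t_j)`. -/
noncomputable def wordSum (f : List ℕ → ℤ) (m j : ℕ) : XWords :=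
  ∑ t ∈ compositionBlocks m j, f t • xw (encodeWord t)

section WordSum

variable (f : List ℕ → ℤ) (m j : ℕ)

lemma wordSum_congr {f g : List ℕ → ℤ} (h : ∀ t ∈ compositionBlocks m j, f t = g t) :
    wordSum f m j = wordSum g m j :=
  sum_congr rfl fun t ht => by rw [h t ht]

lemma wordSum_add (g : List ℕ → ℤ) : wordSum (f + g) m j = wordSum f m j + wordSum g m j := by
  simp only [wordSum, Pi.add_apply, add_smul, sum_add_distrib]

lemma wordSum_smul (c : ℤ) : wordSum (c • f) m j = c • wordSum f m j := by
  simp only [wordSum, Pi.smul_apply, smul_eq_mul, mul_smul, Finset.smul_sum]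

@[simp]
lemma wordSum_zero_zero : wordSum f 0 0 = f [] • xw [] := by
  simp [wordSum, encodeWord]

@[simp]
lemma wordSum_zero_succ : wordSum f 0 (j + 1) = 0 := by
  simp [wordSum]

@[simp]
lemma wordSum_succ_zero : wordSum f (m + 1) 0 = 0 := by
  simp [wordSum]

lemma wordSum_succ_succ :
    wordSum f (m + 1) (j + 1) =
      mapDomain (List.cons true) (wordSum (fun t => f (1 :: t)) m j) +
        mapDomain (List.cons false) (wordSum (fun t => f (t.modifyHead (· + 1))) m (j + 1)) := by
  simp only [wordSum, sum_compositionBlocks_succ_succ_eq_one_cons_add, mapDomain_finsetSum,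
    mapDomain_smul, ← xw_cons, encodeWord_one_cons]
  congr 1
  refine sum_congr rfl fun t ht => ?_
  obtain ⟨-, hlen, hpos⟩ := mem_compositionBlocks.1 ht
  obtain ⟨a, t, rfl⟩ := List.exists_cons_of_length_eq_add_one hlen
  rw [List.modifyHead_cons, encodeWord_succ_cons (hpos a List.mem_cons_self)]

@[simp]
lemma wordSum_succ_apply_nil : wordSum f (m + 1) j [] = 0 := by
  cases j with
  | zero => simp
  | succ j => simp [wordSum_succ_succ]

@[simp]
lemma letterDeriv_true_wordSum :
    letterDeriv true (wordSum f (m + 1) (j + 1)) = wordSum (fun t => f (1 :: t)) m j := by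
  simp [wordSum_succ_succ]

@[simp]
lemma letterDeriv_false_wordSum :
    letterDeriv false (wordSum f (m + 1) (j + 1)) =
      wordSum (fun t => f (t.modifyHead (· + 1))) m (j + 1) := by
  simp [wordSum_succ_succ]

end WordSum

lemma Ccoef_one_cons (t : List ℕ) : Ccoef (1 :: t) = 1 + Ccoef t := by
  have hexp : ∀ x y : ℕ, 1 + x - (y + 1) = x - y := by omega
  simp only [Ccoef, List.length_cons, List.sum_cons, sum_range_succ', List.take_succ_cons,
    List.take_zero, List.sum_nil, hexp]
  ring

lemma Ccoef_succ_cons {a : ℕ} (ha : 0 < a) {t : List ℕ} (ht : ∀ x ∈ t, 0 < x) :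
    Ccoef ((a + 1) :: t) = 2 * Ccoef (a :: t) := by
  have hexp : ∀ x y : ℕ, y ≤ x → a + 1 + x - (y + 1) = a + x - (y + 1) + 1 := by omega
  have htake : ∀ j ∈ range (t.length + 1), j ≤ (t.take j).sum := fun j hj => by
    have := (t.take j).length_le_sum_of_one_le fun x hx => ht x (List.mem_of_mem_take hx)
    simp only [List.length_take, mem_range] at this hj
    omega
  simp only [Ccoef, List.length_cons, List.sum_cons, List.take_succ_cons, mul_add, Finset.mul_sum,
    ← pow_succ', hexp _ _ (t.length_le_sum_of_one_le ht)]
  congr 1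
  exact sum_congr rfl fun j hj => by rw [hexp _ _ (htake j hj)]

lemma Ccoef_dropLast_one_cons {t : List ℕ} (ht : t ≠ []) :
    Ccoef (1 :: t).dropLast = 1 + Ccoef t.dropLast := by
  rw [List.dropLast_cons_of_ne_nil ht, Ccoef_one_cons]

lemma Ccoef_dropLast_modifyHead {t : List ℕ} (hlen : 2 ≤ t.length) (ht : ∀ x ∈ t, 0 < x) :
    Ccoef (t.modifyHead (· + 1)).dropLast = 2 * Ccoef t.dropLast := by
  obtain ⟨a, b, t, rfl⟩ : ∃ a b t', t = a :: b :: t' := by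
    rcases t with _ | ⟨a, _ | ⟨b, t⟩⟩ <;> simp_all
  simp only [List.modifyHead_cons, List.dropLast_cons_cons]
  exact Ccoef_succ_cons (ht a List.mem_cons_self)
    fun x hx => ht x (List.mem_cons_of_mem _ (List.dropLast_subset _ hx))

lemma wordSum_Ccoef_dropLast_one (n : ℕ) :
    wordSum (fun t => Ccoef t.dropLast) (n + 1) 1 = xw (encodeWord [n + 1]) := by
  induction n with
  | zero => simp [wordSum_succ_succ, Ccoef, ← xw_cons]
  | succ n ih =>
    have hlen : ∀ t ∈ compositionBlocks (n + 1) 1,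
        Ccoef (t.modifyHead (· + 1)).dropLast = Ccoef t.dropLast := fun t ht => by
      obtain ⟨a, rfl⟩ := List.length_eq_one_iff.1 (mem_compositionBlocks.1 ht).2.1
      rfl
    rw [wordSum_succ_succ, wordSum_succ_zero, wordSum_congr _ _ hlen, ih,
      encodeWord_succ_cons n.succ_pos, xw_cons]
    simp

/-- `G(n, j)`, with `xw (encodeWord [p + 1]) = u_p = x₀^p x₁`. -/
noncomputable def headShuffleSum (sh : XWords →ₗ[ℤ] XWords →ₗ[ℤ] XWords) (n j : ℕ) : XWords :=
  ∑ x ∈ antidiagonal n, sh (xw (encodeWord [x.1 + 1])) (wordSum (fun _ => 1) x.2 j)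

structure IsShuffleProduct (sh : XWords →ₗ[ℤ] XWords →ₗ[ℤ] XWords) : Prop where
  nil_left : ∀ w : XWords, sh (xw []) w = w
  nil_right : ∀ w : XWords, sh w (xw []) = w
  cons_cons : ∀ (a b : Bool) (u v : List Bool),
    sh (xw (a :: u)) (xw (b :: v)) =
      mapDomain (List.cons a) (sh (xw u) (xw (b :: v))) +
        mapDomain (List.cons b) (sh (xw (a :: u)) (xw v))

namespace IsShuffleProduct

variable {sh : XWords →ₗ[ℤ] XWords →ₗ[ℤ] XWords} (hsh : IsShuffleProduct sh)
include hsh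

lemma apply_nil (x y : XWords) : sh x y [] = x [] * y [] := by
  suffices sh.compr₂ (lapply []) = (LinearMap.mul ℤ ℤ).compl₁₂ (lapply []) (lapply []) from
    DFunLike.congr_fun (DFunLike.congr_fun this x) y
  refine bilinear_ext_xw fun u v => ?_
  simp only [LinearMap.compr₂_apply, LinearMap.compl₁₂_apply, lapply_apply, LinearMap.mul_apply']
  rcases u with _ | ⟨a, u⟩
  · simp [hsh.nil_left]
  rcases v with _ | ⟨b, v⟩
  · simp [hsh.nil_right]
  simp [hsh.cons_cons]

lemma leibniz (a : Bool) (x y : XWords) :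
    letterDeriv a (sh x y) = sh (letterDeriv a x) y + sh x (letterDeriv a y) := by
  suffices sh.compr₂ (letterDeriv a) = sh ∘ₗ letterDeriv a + sh.compl₂ (letterDeriv a) from
    DFunLike.congr_fun (DFunLike.congr_fun this x) y
  refine bilinear_ext_xw fun u v => ?_
  simp only [LinearMap.compr₂_apply, LinearMap.add_apply, LinearMap.coe_comp, Function.comp_apply,
    LinearMap.compl₂_apply]
  rcases u with _ | ⟨b, u⟩
  · simp [hsh.nil_left]
  rcases v with _ | ⟨c, v⟩
  · simp [hsh.nil_right]
  rw [hsh.cons_cons]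
  simp only [map_add, letterDeriv_mapDomain_cons, letterDeriv_xw_cons]
  split_ifs <;> simp

lemma headShuffleSum_zero_right (n : ℕ) : headShuffleSum sh n 0 = xw (encodeWord [n + 1]) := by
  rw [headShuffleSum, Finset.sum_eq_single (n, 0)]
  · simp [hsh.nil_right]
  · rintro ⟨p, _ | m⟩ hx hne
    · simp_all
    · simp
  · simp

lemma headShuffleSum_apply_nil (n j : ℕ) : headShuffleSum sh n j [] = 0 := by
  simp [headShuffleSum, finsetSum_apply, hsh.apply_nil, encodeWord_ne_nil]

lemma letterDeriv_false_headShuffleSum (n j : ℕ) :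
    letterDeriv false (headShuffleSum sh (n + 1) (j + 1)) =
      (2 : ℤ) • headShuffleSum sh n (j + 1) := by
  simp only [headShuffleSum, map_sum, hsh.leibniz, sum_add_distrib]
  rw [Finset.Nat.sum_antidiagonal_succ, Finset.Nat.sum_antidiagonal_succ']
  simp [encodeWord_succ_cons, two_smul]

lemma letterDeriv_true_headShuffleSum (n j : ℕ) :
    letterDeriv true (headShuffleSum sh (n + 1) (j + 1)) =
      wordSum (fun _ => 1) (n + 1) (j + 1) + headShuffleSum sh n j := by
  simp only [headShuffleSum, map_sum, hsh.leibniz, sum_add_distrib]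
  rw [Finset.Nat.sum_antidiagonal_succ, Finset.Nat.sum_antidiagonal_succ']
  simp [encodeWord_succ_cons, hsh.nil_left]

theorem headShuffleSum_eq (n j : ℕ) :
    headShuffleSum sh n j = wordSum (fun t => Ccoef t.dropLast) (n + 1) (j + 1) := by
  induction n generalizing j with
  | zero =>
    cases j with
    | zero => rw [hsh.headShuffleSum_zero_right, wordSum_Ccoef_dropLast_one]
    | succ j => simp [headShuffleSum, wordSum_succ_succ]
  | succ n ih =>
    cases j with
    | zero => rw [hsh.headShuffleSum_zero_right, wordSum_Ccoef_dropLast_one]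
    | succ j =>
      refine ext_letterDeriv (by simp [hsh.headShuffleSum_apply_nil]) (Bool.rec ?_ ?_)
      · rw [hsh.letterDeriv_false_headShuffleSum, ih, letterDeriv_false_wordSum, ← wordSum_smul]
        refine (wordSum_congr _ _ fun t ht => ?_).symm
        obtain ⟨-, hlen, hpos⟩ := mem_compositionBlocks.1 ht
        exact Ccoef_dropLast_modifyHead (by omega) hpos
      · rw [hsh.letterDeriv_true_headShuffleSum, ih, letterDeriv_true_wordSum, ← wordSum_add]
        refine (wordSum_congr _ _ fun t ht => ?_).symm
        obtain ⟨-, hlen, -⟩ := mem_compositionBlocks.1 ht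
        exact Ccoef_dropLast_one_cons (List.ne_nil_of_length_pos (by omega))

lemma sum_shuffle_headI_tail (n j : ℕ) :
    ∑ l ∈ compositionBlocks n (j + 1), sh (xw (encodeWord [l.headI])) (xw (encodeWord l.tail)) =
      wordSum (fun t => Ccoef t.dropLast) n (j + 1) := by
  cases n with
  | zero => simp
  | succ n =>
    rw [sum_compositionBlocks_succ_succ, ← hsh.headShuffleSum_eq]
    simp [headShuffleSum, wordSum, map_sum]

end IsShuffleProduct

theorem shuffle_sum_formula_general
    (sh : XWords →ₗ[ℤ] XWords →ₗ[ℤ] XWords)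
    (hsunitl : ∀ w : XWords, sh (xw []) w = w)
    (hsunitr : ∀ w : XWords, sh w (xw []) = w)
    (hsrec : ∀ (a b : Bool) (u v : List Bool),
      sh (xw (a :: u)) (xw (b :: v)) =
        Finsupp.mapDomain (List.cons a) (sh (xw u) (xw (b :: v))) +
          Finsupp.mapDomain (List.cons b) (sh (xw (a :: u)) (xw v)))
    (msh : QWords →ₗ[ℤ] QWords →ₗ[ℤ] QWords)
    (hsupp : ∀ u v : List ℕ, (∀ x ∈ u, 1 ≤ x) → (∀ x ∈ v, 1 ≤ x) →
      ∀ l ∈ (msh (zw u) (zw v)).support, ∀ x ∈ l, 1 ≤ x)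
    (hcompat : ∀ u v : List ℕ, (∀ x ∈ u, 1 ≤ x) → (∀ x ∈ v, 1 ≤ x) →
      Finsupp.mapDomain encodeWord (msh (zw u) (zw v)) =
        sh (xw (encodeWord u)) (xw (encodeWord v)))
    (k n : ℕ) (hk : 2 ≤ k) :
    ∑ c ∈ Finset.univ.filter (fun c : Composition n => c.length = k),
        msh (zw [c.blocks.headI]) (zw c.blocks.tail)
      = ∑ c ∈ Finset.univ.filter (fun c : Composition n => c.length = k),
          Ccoef (c.blocks.take (k - 1)) • zw c.blocks := by
  have hsh : IsShuffleProduct sh := ⟨hsunitl, hsunitr, hsrec⟩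
  obtain ⟨j, rfl⟩ : ∃ j, k = j + 1 := ⟨k - 1, by omega⟩
  have hpos : ∀ c ∈ univ.filter (fun c : Composition n => c.length = j + 1),
      (∀ x ∈ [c.blocks.headI], 1 ≤ x) ∧ ∀ x ∈ c.blocks.tail, 1 ≤ x := fun c hc => by
    obtain ⟨a, t, ht⟩ := List.exists_cons_of_length_eq_add_one (mem_filter.1 hc).2
    have hblocks : ∀ x ∈ c.blocks, 1 ≤ x := fun _ => c.one_le_blocks
    rw [ht] at hblocks ⊢
    simpa using hblocks
  refine mapDomain_injOn _ encodeWord_injOn ?_ ?_ ?_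
  · intro l hl
    obtain ⟨c, hc, hl⟩ := mem_support_finsetSum l hl
    exact hsupp _ _ (hpos c hc).1 (hpos c hc).2 l hl
  · intro l hl
    obtain ⟨c, -, hl⟩ := mem_support_finsetSum l hl
    rw [mem_singleton.1 (support_smul.trans support_single_subset hl)]
    exact fun _ => c.blocks_pos
  · rw [mapDomain_finsetSum, mapDomain_finsetSum,
      sum_congr rfl fun c hc => hcompat _ _ (hpos c hc).1 (hpos c hc).2,
      sum_compositions_eq_sum_compositionBlocks _ _
        fun l => sh (xw (encodeWord [l.headI])) (xw (encodeWord l.tail)),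
      hsh.sum_shuffle_headI_tail, wordSum,
      ← sum_compositions_eq_sum_compositionBlocks]
    refine sum_congr rfl fun c hc => ?_
    rw [mapDomain_smul, zw, mapDomain_single, List.dropLast_eq_take, ← Composition.length,
      (mem_filter.1 hc).2]
    rfl

/-- Sum formula for the transported shuffle product: for `k ≥ 2`,
`n ≥ k`, `∑_{r+s₁+⋯+s_{k-1}=n, all ≥1} z_r ш z_{s₁,…,s_{k-1}}
  = ∑_{t₁+⋯+t_k=n, tᵢ≥1} C(t₁,…,t_{k-1}) z_{t₁,…,t_k}`. -/
theorem shuffle_sum_formula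
    (sh : XWords →ₗ[ℤ] XWords →ₗ[ℤ] XWords)
    (hsunitl : ∀ w : XWords, sh (xw []) w = w)
    (hsunitr : ∀ w : XWords, sh w (xw []) = w)
    (hsrec : ∀ (a b : Bool) (u v : List Bool),
      sh (xw (a :: u)) (xw (b :: v)) =
        Finsupp.mapDomain (List.cons a) (sh (xw u) (xw (b :: v))) +
          Finsupp.mapDomain (List.cons b) (sh (xw (a :: u)) (xw v)))
    (msh : QWords →ₗ[ℤ] QWords →ₗ[ℤ] QWords)
    (hsupp : ∀ u v : List ℕ, (∀ x ∈ u, 1 ≤ x) → (∀ x ∈ v, 1 ≤ x) →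
      ∀ l ∈ (msh (zw u) (zw v)).support, ∀ x ∈ l, 1 ≤ x)
    (hcompat : ∀ u v : List ℕ, (∀ x ∈ u, 1 ≤ x) → (∀ x ∈ v, 1 ≤ x) →
      Finsupp.mapDomain encodeWord (msh (zw u) (zw v)) =
        sh (xw (encodeWord u)) (xw (encodeWord v)))
    (k n : ℕ) (hk : 2 ≤ k) (hn : k ≤ n) :
    ∑ c ∈ Finset.univ.filter (fun c : Composition n => c.length = k),
        msh (zw [c.blocks.headI]) (zw c.blocks.tail)
      = ∑ c ∈ Finset.univ.filter (fun c : Composition n => c.length = k),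
          Ccoef (c.blocks.take (k - 1)) • zw c.blocks :=
  shuffle_sum_formula_general sh hsunitl hsunitr hsrec msh hsupp hcompat k n hk
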